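/- Assume V(x) = ½‖∇ψ(x)‖² is convex and Crit_ψ ≠ ∅, and let v be a strongly evanescent solution of the second-order gradient system (DS-2). Then: (i) for every x̂ ∈ Crit_ψ the function t ↦ ‖v(t) − x̂‖ is nonincreasing; (ii) v is bounded on [0, ∞); (iii) there exists x̂⋆ ∈ Crit_ψ such that v(t) converges weakly to x̂⋆ as t → ∞ (i.e. ⟨v(t), y⟩ → ⟨x̂⋆, y⟩ for every y ∈ H). -/

import Mathlib

/-!
For two solutions of `v'' = F v` with `F` monotone, the derivative of `⟪u', u⟫`, `u` their
difference, is `‖u'‖² + ⟪F v₁ - F v₂, u⟫ ≥ 0`. If `⟪u', u⟫` ever became positive, `‖u‖²` would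
grow linearly while `(log ‖u‖²)' ≤ C ‖u'‖²` stays integrable, which is absurd; so `‖u‖` is
nonincreasing. With `F = ∇V`, `V` convex, this applies to `v` and a critical point (a constant
solution), giving (i) and (ii), and to `v` and its time shifts, showing that `‖v'‖` is
nonincreasing. Energy conservation `½‖v'‖² - V(v) = const` and integrability then force
`V(v(t)) → 0`, so by convexity every weak cluster point of `v` is critical, and Opial's argument
gives weak convergence.
-/

open Filter MeasureTheory Set
open scoped RealInnerProductSpace Topology

section RealAnalysis

variable {a : ℝ}

theorem monotoneOn_Ici_of_hasDerivWithinAt_nonneg {f f' : ℝ → ℝ}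
    (hf : ∀ t ∈ Ici a, HasDerivWithinAt f (f' t) (Ici a) t) (hf' : ∀ t ∈ Ici a, 0 ≤ f' t) :
    MonotoneOn f (Ici a) :=
  monotoneOn_of_hasDerivWithinAt_nonneg (convex_Ici a)
    (fun t ht => (hf t ht).continuousWithinAt)
    (fun t ht => (hf t (interior_subset ht)).mono interior_subset)
    (fun t ht => hf' t (interior_subset ht))

theorem antitoneOn_Ici_of_hasDerivWithinAt_nonpos {f f' : ℝ → ℝ}
    (hf : ∀ t ∈ Ici a, HasDerivWithinAt f (f' t) (Ici a) t) (hf' : ∀ t ∈ Ici a, f' t ≤ 0) :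
    AntitoneOn f (Ici a) :=
  antitoneOn_of_hasDerivWithinAt_nonpos (convex_Ici a)
    (fun t ht => (hf t ht).continuousWithinAt)
    (fun t ht => (hf t (interior_subset ht)).mono interior_subset)
    (fun t ht => hf' t (interior_subset ht))

theorem AntitoneOn.exists_tendsto_atTop {f : ℝ → ℝ} (hf : AntitoneOn f (Ici a))
    (hbdd : BddBelow (f '' Ici a)) : ∃ L, Tendsto f atTop (𝓝 L) := by
  have hg : Antitone fun t => f (max t a) := fun s t hst =>
    hf (le_max_right s a) (le_max_right t a) (max_le_max hst le_rfl)
  have hgbdd : BddBelow (range fun t => f (max t a)) :=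
    hbdd.mono (range_subset_iff.2 fun t => mem_image_of_mem f (le_max_right t a))
  refine ⟨_, (tendsto_atTop_ciInf hg hgbdd).congr' ?_⟩
  filter_upwards [eventually_ge_atTop a] with t ht
  rw [max_eq_left ht]

theorem eq_zero_of_integrableOn_Ioi_of_tendsto {E : Type*} [NormedAddCommGroup E] {f : ℝ → E}
    {L : E} (hf : IntegrableOn f (Ioi a)) (hlim : Tendsto f atTop (𝓝 L)) : L = 0 := by
  by_contra hL
  have hL2 : 0 < ‖L‖ / 2 := half_pos (norm_pos_iff.2 hL)
  obtain ⟨T, hT⟩ := eventually_atTop.1 <|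
    hlim.norm.eventually (lt_mem_nhds (half_lt_self (norm_pos_iff.2 hL)))
  have hconst : IntegrableOn (fun _ => ‖L‖ / 2) (Ioi (max a T)) := by
    refine Integrable.mono' (hf.mono_set (Ioi_subset_Ioi (le_max_left a T))).norm
      aestronglyMeasurable_const ((ae_restrict_iff' measurableSet_Ioi).2 ?_)
    refine Eventually.of_forall fun t ht => ?_
    rw [Real.norm_of_nonneg hL2.le]
    exact (hT t ((le_max_right a T).trans (le_of_lt ht))).le
  simp [hL2.ne'] at hconst

theorem add_mul_sub_le_of_hasDerivWithinAt {p q : ℝ → ℝ}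
    (hq : ∀ t ∈ Ici a, HasDerivWithinAt q (p t) (Ici a) t) (hp : MonotoneOn p (Ici a))
    {s t : ℝ} (hs : a ≤ s) (hst : s ≤ t) : q s + p s * (t - s) ≤ q t := by
  have hmono : MonotoneOn (fun r => q r - p s * r) (Ici s) := by
    refine monotoneOn_Ici_of_hasDerivWithinAt_nonneg (f' := fun r => p r - p s) (fun r hr => ?_)
      fun r hr => sub_nonneg.2 (hp hs (hs.trans hr) hr)
    exact ((hq r (hs.trans hr)).mono (Ici_subset_Ici.2 hs)).sub
      (by simpa using (hasDerivWithinAt_id r _).const_mul (p s))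
  have := hmono self_mem_Ici hst hst
  linarith

theorem nonpos_of_hasDerivWithinAt_of_sq_le_mul {p q w : ℝ → ℝ}
    (hq : ∀ t ∈ Ici a, HasDerivWithinAt q (p t) (Ici a) t) (hp : MonotoneOn p (Ici a))
    (hq0 : ∀ t ∈ Ici a, 0 ≤ q t) (hpq : ∀ t ∈ Ici a, p t ^ 2 ≤ w t * q t)
    (hw : IntegrableOn w (Ioi a)) {s : ℝ} (hs : a ≤ s) : p s ≤ 0 := by
  by_contra! hps
  have hgrowth : ∀ t, s ≤ t → q s + p s * (t - s) ≤ q t :=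
    fun t hst => add_mul_sub_le_of_hasDerivWithinAt hq hp hs hst
  have hqpos : ∀ t, s < t → 0 < q t := fun t hst => by
    nlinarith [hgrowth t hst.le, hq0 s hs]
  have hq_top : Tendsto q atTop atTop := by
    refine tendsto_atTop_mono' atTop ((eventually_ge_atTop s).mono hgrowth) ?_
    exact tendsto_atTop_add_const_left _ _
      ((tendsto_atTop_add_const_right _ (-s) tendsto_id).const_mul_atTop hps)
  have hderiv : ∀ᶠ t in atTop, HasDerivAt (fun r => Real.log (q r)) (p t / q t) t := by
    filter_upwards [eventually_gt_atTop s] with t hst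
    exact ((hq t (hs.trans hst.le)).hasDerivAt (Ici_mem_nhds (hs.trans_lt hst))).log
      (hqpos t hst).ne'
  refine not_integrableOn_of_tendsto_norm_atTop_of_deriv_isBigO_filter atTop (Ioi_mem_atTop a)
    (hderiv.mono fun t ht => ht.differentiableAt)
    (tendsto_norm_atTop_atTop.comp (Real.tendsto_log_atTop.comp hq_top)) ?_ hw
  refine Asymptotics.IsBigO.of_bound (p s)⁻¹ ?_
  filter_upwards [hderiv, eventually_gt_atTop s] with t ht hst
  have hpt : p s ≤ p t := hp hs (hs.trans hst.le) hst.le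
  have hqt := hqpos t hst
  rw [ht.deriv, Real.norm_of_nonneg (div_nonneg (hps.trans_le hpt).le hqt.le),
    div_le_iff₀ hqt]
  calc p t ≤ p t * p t / p s := by
        rw [le_div_iff₀ hps]
        exact mul_le_mul_of_nonneg_left hpt (hps.trans_le hpt).le
    _ ≤ w t * q t / p s :=
        div_le_div_of_nonneg_right (by simpa [sq] using hpq t (hs.trans hst.le)) hps.le
    _ ≤ (p s)⁻¹ * ‖w t‖ * q t := by
        rw [div_eq_inv_mul, mul_assoc]
        gcongr
        exact Real.le_norm_self _

theorem integrableOn_Ioi_comp_add {E : Type*} [NormedAddCommGroup E] {f : ℝ → E} {s : ℝ}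
    (hf : IntegrableOn f (Ioi a)) (hs : 0 ≤ s) : IntegrableOn (fun t => f (t + s)) (Ioi a) := by
  have := ((measurePreserving_add_right volume s).integrableOn_comp_preimage
    (measurableEmbedding_addRight s)).2
    (hf.mono_set (Ioi_subset_Ioi (le_add_of_nonneg_right hs)))
  rwa [preimage_add_const_Ioi, add_sub_cancel_right] at this

end RealAnalysis

section Integrability

variable {α : Type*} [MeasurableSpace α] {μ : Measure α}

theorem Integrable.norm_sub_sq {E : Type*} [NormedAddCommGroup E] {f g : α → E}
    (hfm : AEStronglyMeasurable f μ) (hgm : AEStronglyMeasurable g μ)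
    (hf : Integrable (fun x => ‖f x‖ ^ 2) μ) (hg : Integrable (fun x => ‖g x‖ ^ 2) μ) :
    Integrable (fun x => ‖f x - g x‖ ^ 2) μ :=
  (memLp_two_iff_integrable_sq_norm (hfm.sub hgm)).1
    (((memLp_two_iff_integrable_sq_norm hfm).2 hf).sub
      ((memLp_two_iff_integrable_sq_norm hgm).2 hg))

theorem Integrable.of_add_of_nonneg {f g : α → ℝ} (hfg : Integrable (fun x => f x + g x) μ)
    (hfm : AEStronglyMeasurable f μ) (hf : ∀ x, 0 ≤ f x) (hg : ∀ x, 0 ≤ g x) :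
    Integrable f μ :=
  hfg.mono' hfm <| Eventually.of_forall fun x => by
    rw [Real.norm_of_nonneg (hf x)]
    linarith [hg x]

end Integrability

section HilbertSpace

variable {H : Type*} [NormedAddCommGroup H] [InnerProductSpace ℝ H]

def WeakTendsto {α : Type*} (x : α → H) (l : Filter α) (z : H) : Prop :=
  ∀ y : H, Tendsto (fun t => ⟪x t, y⟫) l (𝓝 ⟪z, y⟫)

theorem eq_of_weakTendsto_of_tendsto_norm_sub {α : Type*} {l : Filter α} {x : α → H}
    {z₁ z₂ : H} {r₁ r₂ : ℝ} (h₁ : Tendsto (fun t => ‖x t - z₁‖) l (𝓝 r₁))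
    (h₂ : Tendsto (fun t => ‖x t - z₂‖) l (𝓝 r₂)) {u₁ u₂ : ℕ → α} (hu₁ : Tendsto u₁ atTop l)
    (hu₂ : Tendsto u₂ atTop l) (hz₁ : WeakTendsto (x ∘ u₁) atTop z₁)
    (hz₂ : WeakTendsto (x ∘ u₂) atTop z₂) : z₁ = z₂ := by
  set c := (r₂ ^ 2 - r₁ ^ 2 + (‖z₁‖ ^ 2 - ‖z₂‖ ^ 2)) / 2
  have hc : Tendsto (fun t => ⟪x t, z₁ - z₂⟫) l (𝓝 c) := by
    refine ((((h₂.pow 2).sub (h₁.pow 2)).add_const (‖z₁‖ ^ 2 - ‖z₂‖ ^ 2)).div_const 2).congr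
      fun t => ?_
    rw [norm_sub_sq_real, norm_sub_sq_real, inner_sub_right]
    ring
  have e₁ : ⟪z₁, z₁ - z₂⟫ = c := tendsto_nhds_unique (hz₁ _) (hc.comp hu₁)
  have e₂ : ⟪z₂, z₁ - z₂⟫ = c := tendsto_nhds_unique (hz₂ _) (hc.comp hu₂)
  rw [← sub_eq_zero, ← inner_self_eq_zero (𝕜 := ℝ), inner_sub_left, e₁, e₂, sub_self]

theorem HasDerivWithinAt.tendsto_norm_sub_div {f : ℝ → H} {f' : H} {t : ℝ}
    (hf : HasDerivWithinAt f f' (Ici t) t) :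
    Tendsto (fun s => ‖f (t + s) - f t‖ / s) (𝓝[>] 0) (𝓝 ‖f'‖) := by
  have hslope :=
    (hasDerivWithinAt_iff_tendsto_slope' self_notMem_Ioi).1 (hf.mono Ioi_subset_Ici_self)
  have hshift : Tendsto (fun s : ℝ => t + s) (𝓝[>] 0) (𝓝[>] t) := by
    have := map_add_left_nhdsGT (c := t) (a := (0 : ℝ))
    rw [add_zero] at this
    exact this.le
  refine ((hslope.comp hshift).norm).congr' ?_
  filter_upwards [self_mem_nhdsWithin] with s (hs : 0 < s)
  rw [Function.comp_apply, slope_def_module, norm_smul, add_sub_cancel_left, norm_inv,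
    Real.norm_of_nonneg hs.le, inv_mul_eq_div]

structure IsSecondOrderSolution (F : H → H) (v v' : ℝ → H) : Prop where
  hasDerivWithinAt : ∀ t ∈ Ici (0 : ℝ), HasDerivWithinAt v (v' t) (Ici 0) t
  hasDerivWithinAt_deriv : ∀ t ∈ Ici (0 : ℝ), HasDerivWithinAt v' (F (v t)) (Ici 0) t

namespace IsSecondOrderSolution

variable {F : H → H} {v v' : ℝ → H}

theorem const {x : H} (hx : F x = 0) : IsSecondOrderSolution F (fun _ => x) (fun _ => 0) :=
  ⟨fun t _ => hasDerivWithinAt_const t _ x, fun t _ => by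
    simpa [hx] using hasDerivWithinAt_const t (Ici 0) (0 : H)⟩

theorem comp_add_const (h : IsSecondOrderSolution F v v') {s : ℝ} (hs : 0 ≤ s) :
    IsSecondOrderSolution F (fun t => v (t + s)) (fun t => v' (t + s)) := by
  have hshift : ∀ t ∈ Ici (0 : ℝ), HasDerivWithinAt (· + s) 1 (Ici 0) t :=
    fun t _ => (hasDerivWithinAt_id t _).add_const s
  have hmaps : MapsTo (· + s) (Ici (0 : ℝ)) (Ici 0) := fun t ht => add_nonneg ht hs
  refine ⟨fun t ht => ?_, fun t ht => ?_⟩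
  · simpa [Function.comp_def] using
      (h.hasDerivWithinAt _ (hmaps ht)).scomp t (hshift t ht) hmaps
  · simpa [Function.comp_def] using
      (h.hasDerivWithinAt_deriv _ (hmaps ht)).scomp t (hshift t ht) hmaps

theorem continuousOn (h : IsSecondOrderSolution F v v') : ContinuousOn v (Ici 0) :=
  fun t ht => (h.hasDerivWithinAt t ht).continuousWithinAt

theorem continuousOn_deriv (h : IsSecondOrderSolution F v v') : ContinuousOn v' (Ici 0) :=
  fun t ht => (h.hasDerivWithinAt_deriv t ht).continuousWithinAt

theorem antitoneOn_norm_sub (hF : ∀ x y, 0 ≤ ⟪F x - F y, x - y⟫) {v₁ v₁' v₂ v₂' : ℝ → H}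
    (h₁ : IsSecondOrderSolution F v₁ v₁') (h₂ : IsSecondOrderSolution F v₂ v₂')
    (hw : IntegrableOn (fun t => ‖v₁' t - v₂' t‖ ^ 2) (Ioi 0)) :
    AntitoneOn (fun t => ‖v₁ t - v₂ t‖) (Ici 0) := by
  have hu : ∀ t ∈ Ici (0 : ℝ),
      HasDerivWithinAt (fun t => v₁ t - v₂ t) (v₁' t - v₂' t) (Ici 0) t :=
    fun t ht => (h₁.hasDerivWithinAt t ht).sub (h₂.hasDerivWithinAt t ht)
  have hu' : ∀ t ∈ Ici (0 : ℝ), HasDerivWithinAt (fun t => v₁' t - v₂' t)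
      (F (v₁ t) - F (v₂ t)) (Ici 0) t :=
    fun t ht => (h₁.hasDerivWithinAt_deriv t ht).sub (h₂.hasDerivWithinAt_deriv t ht)
  have hq : ∀ t ∈ Ici (0 : ℝ), HasDerivWithinAt (fun t => ‖v₁ t - v₂ t‖ ^ 2)
      (2 * ⟪v₁' t - v₂' t, v₁ t - v₂ t⟫) (Ici 0) t := fun t ht => by
    simpa [real_inner_comm] using (hu t ht).norm_sq
  have hp : MonotoneOn (fun t => 2 * ⟪v₁' t - v₂' t, v₁ t - v₂ t⟫) (Ici 0) := by
    refine monotoneOn_Ici_of_hasDerivWithinAt_nonneg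
      (fun t ht => ((hu' t ht).inner ℝ (hu t ht)).const_mul 2) fun t _ => ?_
    linarith [hF (v₁ t) (v₂ t), real_inner_self_nonneg (x := v₁' t - v₂' t)]
  have hpq : ∀ t ∈ Ici (0 : ℝ), (2 * ⟪v₁' t - v₂' t, v₁ t - v₂ t⟫) ^ 2 ≤
      4 * ‖v₁' t - v₂' t‖ ^ 2 * ‖v₁ t - v₂ t‖ ^ 2 := fun t _ => by
    have := pow_le_pow_left₀ (abs_nonneg _)
      (abs_real_inner_le_norm (v₁' t - v₂' t) (v₁ t - v₂ t)) 2
    rw [mul_pow, sq_abs] at this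
    nlinarith
  have hpnonpos : ∀ t ∈ Ici (0 : ℝ), 2 * ⟪v₁' t - v₂' t, v₁ t - v₂ t⟫ ≤ 0 := fun t ht =>
    nonpos_of_hasDerivWithinAt_of_sq_le_mul hq hp (fun t _ => by positivity) hpq
      (hw.const_mul 4) ht
  intro s hs t ht hst
  exact (pow_le_pow_iff_left₀ (norm_nonneg _) (norm_nonneg _) two_ne_zero).1
    (antitoneOn_Ici_of_hasDerivWithinAt_nonpos hq hpnonpos hs ht hst)

/-- `‖v (t + s) - v t‖ / s` is nonincreasing in `t` for each `s > 0`, and tends to `‖v' t‖`. -/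
theorem antitoneOn_norm_deriv (hF : ∀ x y, 0 ≤ ⟪F x - F y, x - y⟫)
    (h : IsSecondOrderSolution F v v') (hw : IntegrableOn (fun t => ‖v' t‖ ^ 2) (Ioi 0)) :
    AntitoneOn (fun t => ‖v' t‖) (Ici 0) := by
  have hmeas : ∀ s ≥ (0 : ℝ),
      AEStronglyMeasurable (fun t => v' (t + s)) (volume.restrict (Ioi 0)) :=
    fun s hs => (h.continuousOn_deriv.comp (continuous_add_const s).continuousOn
      fun t ht => add_nonneg (le_of_lt ht) hs).aestronglyMeasurable measurableSet_Ioi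
  have hshift : ∀ s > 0, AntitoneOn (fun t => ‖v (t + s) - v t‖) (Ici 0) := fun s hs =>
    (h.comp_add_const hs.le).antitoneOn_norm_sub hF h <| Integrable.norm_sub_sq
      (hmeas s hs.le) (by simpa using hmeas 0 le_rfl) (integrableOn_Ioi_comp_add hw hs.le) hw
  intro s hs t ht hst
  refine le_of_tendsto_of_tendsto
    ((h.hasDerivWithinAt t ht).mono (Ici_subset_Ici.2 ht)).tendsto_norm_sub_div
    ((h.hasDerivWithinAt s hs).mono (Ici_subset_Ici.2 hs)).tendsto_norm_sub_div ?_
  filter_upwards [self_mem_nhdsWithin] with r (hr : 0 < r)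
  exact div_le_div_of_nonneg_right (hshift r hr hs ht hst) hr.le

end IsSecondOrderSolution

variable [CompleteSpace H]

theorem ContDiff.differentiable_gradient {ψ : H → ℝ} (hψ : ContDiff ℝ 2 ψ) :
    Differentiable ℝ (gradient ψ) :=
  ((InnerProductSpace.toDual ℝ H).symm.toContinuousLinearEquiv.contDiff.comp
    (hψ.fderiv_right le_rfl)).differentiable one_ne_zero

theorem IsLocalMin.gradient_eq_zero {f : H → ℝ} {x : H} (h : IsLocalMin f x) :
    gradient f x = 0 := by
  rw [gradient, h.fderiv_eq_zero, map_zero]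

section Convex

variable {f : H → ℝ}

theorem ConvexOn.inner_gradient_le_sub (hf : ConvexOn ℝ univ f) {x g : H}
    (hg : HasGradientAt f g x) (y : H) : ⟪g, y - x⟫ ≤ f y - f x := by
  have hline : ConvexOn ℝ univ (f ∘ (AffineMap.lineMap x y : ℝ →ᵃ[ℝ] H)) := by
    simpa using hf.comp_affineMap (AffineMap.lineMap x y)
  have hderiv : HasDerivAt (f ∘ (AffineMap.lineMap x y : ℝ →ᵃ[ℝ] H)) ⟪g, y - x⟫ 0 := by
    have hfx : HasFDerivAt f (InnerProductSpace.toDual ℝ H g)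
        (AffineMap.lineMap x y (0 : ℝ)) := by
      simpa using hg.hasFDerivAt
    simpa using hfx.comp_hasDerivAt (0 : ℝ) AffineMap.hasDerivAt_lineMap
  simpa [slope] using hline.le_slope_of_hasDerivAt (mem_univ 0) (mem_univ 1) zero_lt_one hderiv

theorem ConvexOn.inner_gradient_sub_gradient_nonneg (hf : ConvexOn ℝ univ f) {x y gx gy : H}
    (hx : HasGradientAt f gx x) (hy : HasGradientAt f gy y) : 0 ≤ ⟪gx - gy, x - y⟫ := by
  have h₁ := hf.inner_gradient_le_sub hx y
  have h₂ := hf.inner_gradient_le_sub hy x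
  rw [← neg_sub x y, inner_neg_right] at h₁
  rw [inner_sub_left]
  linarith

theorem ConvexOn.le_of_weakTendsto (hf : ConvexOn ℝ univ f) {z g : H}
    (hg : HasGradientAt f g z) {α : Type*} {l : Filter α} [l.NeBot] {x : α → H}
    (hx : WeakTendsto x l z) {c : ℝ} (hfx : Tendsto (fun t => f (x t)) l (𝓝 c)) : f z ≤ c := by
  have hlim : Tendsto (fun t => f (x t) - (⟪x t, g⟫ - ⟪z, g⟫)) l (𝓝 (c - 0)) :=
    hfx.sub (by simpa using (hx g).sub_const ⟪z, g⟫)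
  refine le_of_tendsto_of_tendsto' tendsto_const_nhds (by simpa using hlim) fun t => ?_
  have := hf.inner_gradient_le_sub hg (x t)
  rw [inner_sub_right] at this
  linarith [real_inner_comm g (x t), real_inner_comm g z]

end Convex

/-- Sequential Banach–Alaoglu, applied in the (separable) closed span of the sequence. -/
theorem exists_strictMono_weakTendsto {x : ℕ → H} {M : ℝ} (hx : ∀ n, ‖x n‖ ≤ M) :
    ∃ (φ : ℕ → ℕ) (z : H), StrictMono φ ∧ WeakTendsto (x ∘ φ) atTop z := by
  set K := (Submodule.span ℝ (range x)).topologicalClosure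
  have hxK : ∀ n, x n ∈ K := fun n =>
    Submodule.le_topologicalClosure _ (Submodule.subset_span (mem_range_self n))
  have : TopologicalSpace.SeparableSpace K := by
    have : TopologicalSpace.IsSeparable (K : Set H) := by
      rw [Submodule.topologicalClosure_coe]
      exact (countable_range x).isSeparable.span.closure
    exact this.separableSpace
  have : CompleteSpace K :=
    (Submodule.span ℝ (range x)).isClosed_topologicalClosure.completeSpace_coe
  let ℓ : ℕ → WeakDual ℝ K := fun n => InnerProductSpace.toDual ℝ K ⟨x n, hxK n⟩
  obtain ⟨ℓ₀, -, φ, hφ, hlim⟩ := WeakDual.isSeqCompact_closedBall ℝ K 0 M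
    (x := ℓ) fun n => by
      simp only [mem_preimage, Metric.mem_closedBall, dist_zero_right]
      exact ((InnerProductSpace.toDual ℝ K).norm_map _).trans_le (hx n)
  refine ⟨φ, (InnerProductSpace.toDual ℝ K).symm (WeakDual.toStrongDual ℓ₀), hφ, ?_⟩
  intro y
  have hK : ∀ k : K, ⟪(k : H), y⟫ =
      InnerProductSpace.toDual ℝ K k (K.orthogonalProjectionOnto y) := fun k => by simp
  have hlim' := ((WeakDual.eval_continuous (K.orthogonalProjectionOnto y)).tendsto ℓ₀).comp hlim
  rw [hK, LinearIsometryEquiv.apply_symm_apply]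
  exact hlim'.congr fun t => (hK ⟨x (φ t), hxK _⟩).symm

theorem exists_weakTendsto_of_tendsto_norm_sub {x : ℝ → H} {S : Set H} (hS : S.Nonempty)
    (hdist : ∀ z ∈ S, ∃ r, Tendsto (fun t => ‖x t - z‖) atTop (𝓝 r))
    (hclust : ∀ (u : ℕ → ℝ) (z : H), Tendsto u atTop atTop → WeakTendsto (x ∘ u) atTop z →
      z ∈ S) :
    ∃ z ∈ S, WeakTendsto x atTop z := by
  obtain ⟨z₀, hz₀⟩ := hS
  obtain ⟨r₀, hr₀⟩ := hdist z₀ hz₀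
  have hbdd : ∀ᶠ t in atTop, ‖x t‖ ≤ r₀ + 1 + ‖z₀‖ := by
    filter_upwards [hr₀.eventually (gt_mem_nhds (lt_add_one r₀))] with t ht
    linarith [norm_le_norm_sub_add (x t) z₀]
  have hsubseq : ∀ u : ℕ → ℝ, Tendsto u atTop atTop →
      ∃ φ : ℕ → ℕ, StrictMono φ ∧ ∃ z ∈ S, WeakTendsto (x ∘ u ∘ φ) atTop z := by
    intro u hu
    obtain ⟨N, hN⟩ := eventually_atTop.1 (hu.eventually hbdd)
    obtain ⟨φ, z, hφ, hz⟩ := exists_strictMono_weakTendsto (x := fun n => x (u (n + N)))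
      fun n => hN _ (Nat.le_add_left N n)
    have hφN : StrictMono fun n => φ n + N := fun m n h => Nat.add_lt_add_right (hφ h) N
    exact ⟨_, hφN, z, hclust _ z (hu.comp hφN.tendsto_atTop) hz, hz⟩
  obtain ⟨φ, hφ, z, hzS, hz⟩ := hsubseq Nat.cast tendsto_natCast_atTop_atTop
  refine ⟨z, hzS, ?_⟩
  intro y
  refine tendsto_of_subseq_tendsto fun u hu => ?_
  obtain ⟨ψ, hψ, z', hz'S, hz'⟩ := hsubseq u hu
  obtain ⟨r, hr⟩ := hdist z hzS
  obtain ⟨r', hr'⟩ := hdist z' hz'S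
  have hz'z : z' = z := eq_of_weakTendsto_of_tendsto_norm_sub hr' hr
    (hu.comp hψ.tendsto_atTop) (tendsto_natCast_atTop_atTop.comp hφ.tendsto_atTop) hz' hz
  exact ⟨ψ, hz'z ▸ hz' y⟩

namespace IsSecondOrderSolution

variable {F : H → H} {v v' : ℝ → H}

theorem energy_eq {V : H → ℝ} (hV : ∀ x, HasGradientAt V (F x) x)
    (h : IsSecondOrderSolution F v v') {t : ℝ} (ht : 0 ≤ t) :
    ‖v' t‖ ^ 2 / 2 - V (v t) = ‖v' 0‖ ^ 2 / 2 - V (v 0) := by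
  have hE : ∀ s ∈ Ici (0 : ℝ),
      HasDerivWithinAt (fun s => ‖v' s‖ ^ 2 / 2 - V (v s)) 0 (Ici 0) s := fun s hs => by
    have hV' : HasDerivWithinAt (fun s => V (v s)) ⟪F (v s), v' s⟫ (Ici 0) s := by
      have := (hV (v s)).hasFDerivAt.comp_hasDerivWithinAt s (h.hasDerivWithinAt s hs)
      rwa [InnerProductSpace.toDual_apply_apply] at this
    refine (((h.hasDerivWithinAt_deriv s hs).norm_sq.div_const 2).sub hV').congr_deriv ?_
    rw [real_inner_comm]
    ring
  exact constant_of_has_deriv_right_zero (fun s hs => (hE s hs.1).continuousWithinAt.mono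
    (fun r hr => hr.1)) (fun s hs => (hE s hs.1).mono (Ici_subset_Ici.2 hs.1)) t ⟨ht, le_rfl⟩

theorem tendsto_potential_atTop (hF : ∀ x y, 0 ≤ ⟪F x - F y, x - y⟫) {V : H → ℝ}
    (hV : ∀ x, HasGradientAt V (F x) x) (h : IsSecondOrderSolution F v v')
    (hw : IntegrableOn (fun t => ‖v' t‖ ^ 2) (Ioi 0))
    (hVi : IntegrableOn (fun t => V (v t)) (Ioi 0)) :
    Tendsto (fun t => V (v t)) atTop (𝓝 0) := by
  obtain ⟨c, hc⟩ := (h.antitoneOn_norm_deriv hF hw).exists_tendsto_atTop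
    ⟨0, by rintro _ ⟨t, -, rfl⟩; exact norm_nonneg _⟩
  have hlim : Tendsto (fun t => V (v t)) atTop
      (𝓝 (c ^ 2 / 2 - (‖v' 0‖ ^ 2 / 2 - V (v 0)))) := by
    refine (((hc.pow 2).div_const 2).sub_const _).congr' ?_
    filter_upwards [eventually_ge_atTop 0] with t ht
    linarith [h.energy_eq hV ht]
  rwa [eq_zero_of_integrableOn_Ioi_of_tendsto hVi hlim] at hlim

end IsSecondOrderSolution

end HilbertSpace

/-- Lemma 8: if `V = ½‖∇ψ‖²` is convex, `Crit ψ ≠ ∅` and `v` is a strongly evanescent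
solution of `v'' = ∇V(v)`, then: (i) `t ↦ ‖v t - x̂‖` is nonincreasing for every
`x̂ ∈ Crit ψ`; (ii) `v` is bounded on `[0, ∞)`; (iii) `v(t)` converges weakly to some
`x̂⋆ ∈ Crit ψ` as `t → ∞`. -/
theorem stmt_17 {H : Type*} [NormedAddCommGroup H] [InnerProductSpace ℝ H] [CompleteSpace H]
    (ψ : H → ℝ) (hψ : ContDiff ℝ 2 ψ)
    (V : H → ℝ) (hV : V = fun x => (1/2 : ℝ) * ‖gradient ψ x‖ ^ 2)
    (hVconv : ConvexOn ℝ univ V)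
    (hcrit : {x : H | gradient ψ x = 0}.Nonempty)
    (v v' : ℝ → H)
    (hv : ∀ t ∈ Ici (0:ℝ), HasDerivWithinAt v (v' t) (Ici 0) t)
    (hv' : ∀ t ∈ Ici (0:ℝ), HasDerivWithinAt v' (gradient V (v t)) (Ici 0) t)
    (hev : IntegrableOn (fun t => ‖v' t‖ ^ 2 + V (v t)) (Ioi 0)) :
    (∀ xhat : H, gradient ψ xhat = 0 → AntitoneOn (fun t => ‖v t - xhat‖) (Ici 0)) ∧
      (∃ M : ℝ, ∀ t ≥ (0:ℝ), ‖v t‖ ≤ M) ∧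
      (∃ xstar : H, gradient ψ xstar = 0 ∧
        ∀ y : H, Tendsto (fun t => (inner ℝ (v t) y : ℝ)) atTop (nhds (inner ℝ xstar y))) := by
  have hVdiff : Differentiable ℝ V :=
    hV ▸ fun x => ((hψ.differentiable_gradient x).norm_sq ℝ).const_mul _
  have hVgrad : ∀ x, HasGradientAt V (gradient V x) x := fun x => (hVdiff x).hasGradientAt
  have hV0 : ∀ x, 0 ≤ V x := fun x => by rw [hV]; positivity
  have hVzero : ∀ x, V x = 0 ↔ gradient ψ x = 0 := fun x => by simp [hV]
  have hmono : ∀ x y, 0 ≤ ⟪gradient V x - gradient V y, x - y⟫ := fun x y =>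
    hVconv.inner_gradient_sub_gradient_nonneg (hVgrad x) (hVgrad y)
  have hsol : IsSecondOrderSolution (gradient V) v v' := ⟨hv, hv'⟩
  have hw : IntegrableOn (fun t => ‖v' t‖ ^ 2) (Ioi 0) :=
    Integrable.of_add_of_nonneg hev ((hsol.continuousOn_deriv.norm.pow 2).aestronglyMeasurable
      measurableSet_Ici |>.mono_set Ioi_subset_Ici_self) (fun _ => by positivity) (hV0 <| v ·)
  have hVi : IntegrableOn (fun t => V (v t)) (Ioi 0) :=
    Integrable.of_add_of_nonneg (hev.congr_fun (fun _ _ => add_comm _ _) measurableSet_Ioi)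
      ((hVdiff.continuous.comp_continuousOn hsol.continuousOn).aestronglyMeasurable
        measurableSet_Ici |>.mono_set Ioi_subset_Ici_self) (hV0 <| v ·) (fun _ => by positivity)
  have hcritV : ∀ x, gradient ψ x = 0 → gradient V x = 0 := fun x hx =>
    IsLocalMin.gradient_eq_zero <| .of_forall fun y => ((hVzero x).2 hx).trans_le (hV0 y)
  have hdist : ∀ x, gradient ψ x = 0 → AntitoneOn (fun t => ‖v t - x‖) (Ici 0) := fun x hx =>
    hsol.antitoneOn_norm_sub hmono (.const (hcritV x hx)) (by simpa using hw)
  obtain ⟨x₀, hx₀⟩ := hcrit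
  refine ⟨hdist, ⟨‖v 0 - x₀‖ + ‖x₀‖, fun t ht => ?_⟩, ?_⟩
  · linarith [norm_le_norm_sub_add (v t) x₀, hdist x₀ hx₀ self_mem_Ici ht ht]
  · refine exists_weakTendsto_of_tendsto_norm_sub ⟨x₀, hx₀⟩ (fun z hz =>
      (hdist z hz).exists_tendsto_atTop ⟨0, by rintro _ ⟨t, -, rfl⟩; exact norm_nonneg _⟩)
      fun u z hu hz => (hVzero z).1 (le_antisymm ?_ (hV0 z))
    exact hVconv.le_of_weakTendsto (hVgrad z) hz
      ((hsol.tendsto_potential_atTop hmono hVgrad hw hVi).comp hu)
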